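/- Let h be a σ-hermitian form on V. Then there exists a unique map h₂ : ⋀²V × ⋀²V → K that is additive in each argument, K-linear in the first argument, σ-semilinear in the second argument (h₂(u, b•v) = σ(b)·h₂(u, v)), and satisfies h₂(x₁ ∧ x₂, y₁ ∧ y₂) = h(x₁,y₁)·h(x₂,y₂) − h(x₁,y₂)·h(x₂,y₁) for all x₁, x₂, y₁, y₂ ∈ V. Moreover this h₂ is σ-hermitian: h₂(u, v) = σ(h₂(v, u)) for all u, v ∈ ⋀²V. -/

import Mathlib

/-!
Bundle `h` as a sesquilinear form `B`. Postcomposing with the involution `σ` turns each `B x` into a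
linear functional, so `(x₁, x₂) ↦ σ ∘ ((σ ∘ B x₁) ∧ (σ ∘ B x₂))` is a linear alternating map with
values in the `σ`-semilinear functionals on `⋀²V`, and the universal property of `⋀²V` turns it into
a sesquilinear form `h₂` with `h₂ (x₁ ∧ x₂) (y₁ ∧ y₂) = det (h xⱼ yᵢ)`. Wedges span `⋀²V`, so a
sesquilinear form is determined by its values on pairs of wedges: this gives uniqueness, and applied
to `(u, v) ↦ σ (h₂ v u)`, which has the same wedge values because `h` is hermitian, it shows that
`h₂` is hermitian.
-/

open ExteriorAlgebra

/-- The second exterior power of `V`, realized as the submodule of the exterior algebra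
spanned by all products `ι x * ι y`. -/
def degTwo (K V : Type*) [Field K] [AddCommGroup V] [Module K V] :
    Submodule K (ExteriorAlgebra K V) :=
  Submodule.span K {z : ExteriorAlgebra K V | ∃ x y : V, z = ι K x * ι K y}

/-- The canonical alternating map `V × V → ⋀²V`, `(x, y) ↦ x ∧ y`. -/
def wedge (K V : Type*) [Field K] [AddCommGroup V] [Module K V] (x y : V) :
    degTwo K V :=
  ⟨ι K x * ι K y, Submodule.subset_span ⟨x, y, rfl⟩⟩

namespace AlternatingMap

variable {R M P Q Q' ι : Type*} [Semiring R] [AddCommMonoid M] [Module R M]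
  [AddCommMonoid P] [Module R P] [AddCommMonoid Q] [Module R Q] [AddCommMonoid Q'] [Module R Q']
  {σ : R →+* R} [RingHomInvPair σ σ]

-- Linear in each `vᵢ` because the two `σ`-twists cancel.
def sandwichSemilinear (g : Q →ₛₗ[σ] Q') (f : P [⋀^ι]→ₗ[R] Q) (φ : M →ₛₗ[σ] P) :
    M [⋀^ι]→ₗ[R] Q' where
  toFun v := g (f (φ ∘ v))
  map_update_add' v i x y := by
    simp only [Function.comp_update, map_add, f.map_update_add]
  map_update_smul' v i c x := by
    simp only [Function.comp_update, map_smulₛₗ, f.map_update_smul, RingHomInvPair.comp_apply_eq₂]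
  map_eq_zero_of_eq' v i j hv hij := by
    rw [f.map_eq_zero_of_eq _ (by simp [hv]) hij, g.map_zero]

@[simp]
lemma sandwichSemilinear_apply (g : Q →ₛₗ[σ] Q') (f : P [⋀^ι]→ₗ[R] Q) (φ : M →ₛₗ[σ] P)
    (v : ι → M) : sandwichSemilinear g f φ v = g (f (φ ∘ v)) := rfl

end AlternatingMap

namespace exteriorPower

variable {R M N : Type*} [CommRing R] [AddCommGroup M] [Module R M] [AddCommGroup N] [Module R N]
  {σ : R →+* R} [RingHomInvPair σ σ]

-- `LinearMap.llcomp R _ R R σ.toSemilinearMap` is postcomposition with `σ`.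
noncomputable def sesqPairing (B : M →ₗ[R] N →ₛₗ[σ] R) (n : ℕ) :
    ⋀[R]^n M →ₗ[R] ⋀[R]^n N →ₛₗ[σ] R :=
  alternatingMapLinearEquiv <|
    (alternatingMapToDual R N n).sandwichSemilinear
      (LinearMap.llcomp R _ R R σ.toSemilinearMap)
      (LinearMap.llcomp R N R R σ.toSemilinearMap ∘ₛₗ B)

lemma sesqPairing_ιMulti_ιMulti (B : M →ₗ[R] N →ₛₗ[σ] R) {n : ℕ} (x : Fin n → M)
    (y : Fin n → N) :
    sesqPairing B n (ιMulti R n x) (ιMulti R n y) = (Matrix.of fun i j ↦ B (x j) (y i)).det := by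
  simp only [sesqPairing, alternatingMapLinearEquiv_apply_ιMulti,
    AlternatingMap.sandwichSemilinear_apply, LinearMap.llcomp_apply, RingHom.coe_toSemilinearMap,
    alternatingMapToDual_apply_ιMulti, RingHom.map_det]
  congr 1
  ext i j
  simp

end exteriorPower

section DegTwo

variable {K V : Type*} [Field K] [AddCommGroup V] [Module K V]

lemma ι_mul_ι_eq_ιMulti (x y : V) : ι K x * ι K y = ExteriorAlgebra.ιMulti K 2 ![x, y] := by
  simp [ExteriorAlgebra.ιMulti_apply]

lemma degTwo_eq_exteriorPower : degTwo K V = ⋀[K]^2 V := by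
  rw [degTwo, ← ExteriorAlgebra.ιMulti_span_fixedDegree]
  congr
  ext z
  constructor
  · rintro ⟨x, y, rfl⟩
    exact ⟨![x, y], (ι_mul_ι_eq_ιMulti x y).symm⟩
  · rintro ⟨v, rfl⟩
    refine ⟨v 0, v 1, ?_⟩
    rw [ι_mul_ι_eq_ιMulti]
    congr
    ext i
    fin_cases i <;> rfl

noncomputable def degTwoEquiv : degTwo K V ≃ₗ[K] ⋀[K]^2 V :=
  LinearEquiv.ofEq _ _ degTwo_eq_exteriorPower

lemma degTwoEquiv_wedge (x y : V) :
    degTwoEquiv (wedge K V x y) = exteriorPower.ιMulti K 2 ![x, y] :=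
  Subtype.ext (ι_mul_ι_eq_ιMulti x y)

lemma span_range_wedge :
    Submodule.span K (Set.range fun p : V × V ↦ wedge K V p.1 p.2) = ⊤ := by
  have : (Set.range fun p : V × V ↦ wedge K V p.1 p.2) =
      (↑) ⁻¹' {z : ExteriorAlgebra K V | ∃ x y : V, z = ι K x * ι K y} := by
    ext z
    constructor
    · rintro ⟨⟨x, y⟩, rfl⟩
      exact ⟨x, y, rfl⟩
    · rintro ⟨x, y, hz⟩
      exact ⟨(x, y), Subtype.ext hz.symm⟩
  rw [this]
  exact Submodule.span_span_coe_preimage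

lemma sesqForm_ext_wedge {σ : K →+* K} {B C : degTwo K V →ₗ[K] degTwo K V →ₛₗ[σ] K}
    (h : ∀ x₁ x₂ y₁ y₂ : V,
      B (wedge K V x₁ x₂) (wedge K V y₁ y₂) = C (wedge K V x₁ x₂) (wedge K V y₁ y₂)) :
    B = C :=
  LinearMap.ext_on_range span_range_wedge fun p ↦
    LinearMap.ext_on_range span_range_wedge fun q ↦ h p.1 p.2 q.1 q.2

lemma eq_sesqForm_of_wedge {σ : K →+* K} (S : degTwo K V →ₗ[K] degTwo K V →ₛₗ[σ] K)
    (g : degTwo K V → degTwo K V → K)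
    (add_left : ∀ u u' v, g (u + u') v = g u v + g u' v)
    (add_right : ∀ u v v', g u (v + v') = g u v + g u v')
    (smul_left : ∀ (a : K) u v, g (a • u) v = a * g u v)
    (smul_right : ∀ (b : K) u v, g u (b • v) = σ b * g u v)
    (hwedge : ∀ x₁ x₂ y₁ y₂ : V,
      g (wedge K V x₁ x₂) (wedge K V y₁ y₂) = S (wedge K V x₁ x₂) (wedge K V y₁ y₂)) :
    g = fun u v ↦ S u v := by
  funext u v
  exact LinearMap.congr_fun₂
    (sesqForm_ext_wedge (B := .mk₂'ₛₗ (.id K) σ g add_left smul_left add_right smul_right) hwedge)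
    u v

variable {σ : K →+* K} [RingHomInvPair σ σ]

noncomputable def sesqDegTwo (B : V →ₗ[K] V →ₛₗ[σ] K) : degTwo K V →ₗ[K] degTwo K V →ₛₗ[σ] K :=
  (exteriorPower.sesqPairing B 2 ∘ₗ degTwoEquiv.toLinearMap).compl₂ degTwoEquiv.toLinearMap

lemma sesqDegTwo_wedge_wedge (B : V →ₗ[K] V →ₛₗ[σ] K) (x₁ x₂ y₁ y₂ : V) :
    sesqDegTwo B (wedge K V x₁ x₂) (wedge K V y₁ y₂) = B x₁ y₁ * B x₂ y₂ - B x₁ y₂ * B x₂ y₁ := by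
  simp only [sesqDegTwo, LinearMap.compl₂_apply, LinearMap.comp_apply, LinearEquiv.coe_coe,
    degTwoEquiv_wedge, exteriorPower.sesqPairing_ιMulti_ιMulti, Matrix.det_fin_two, Matrix.of_apply,
    Matrix.cons_val_zero, Matrix.cons_val_one, Matrix.cons_val_fin_one]
  ring

end DegTwo

theorem exists_unique_hermitian_form_on_exterior_square_general
    (K V : Type*) [Field K] [AddCommGroup V] [Module K V]
    (σ : K ≃+* K) (hσ : ∀ a, σ (σ a) = a)
    (h : V → V → K)
    (hadd₁ : ∀ x x' y, h (x + x') y = h x y + h x' y)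
    (hadd₂ : ∀ x y y', h x (y + y') = h x y + h x y')
    (hsmul : ∀ (a b : K) (x y : V), h (a • x) (b • y) = a * σ b * h x y)
    (hherm : ∀ x y, h x y = σ (h y x)) :
    (∃! h₂ : degTwo K V → degTwo K V → K,
      (∀ u u' v, h₂ (u + u') v = h₂ u v + h₂ u' v) ∧
      (∀ u v v', h₂ u (v + v') = h₂ u v + h₂ u v') ∧
      (∀ (a : K) (u v : degTwo K V), h₂ (a • u) v = a * h₂ u v) ∧
      (∀ (b : K) (u v : degTwo K V), h₂ u (b • v) = σ b * h₂ u v) ∧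
      (∀ x₁ x₂ y₁ y₂ : V, h₂ (wedge K V x₁ x₂) (wedge K V y₁ y₂) =
        h x₁ y₁ * h x₂ y₂ - h x₁ y₂ * h x₂ y₁)) ∧
    (∀ h₂ : degTwo K V → degTwo K V → K,
      (∀ u u' v, h₂ (u + u') v = h₂ u v + h₂ u' v) →
      (∀ u v v', h₂ u (v + v') = h₂ u v + h₂ u v') →
      (∀ (a : K) (u v : degTwo K V), h₂ (a • u) v = a * h₂ u v) →
      (∀ (b : K) (u v : degTwo K V), h₂ u (b • v) = σ b * h₂ u v) →
      (∀ x₁ x₂ y₁ y₂ : V, h₂ (wedge K V x₁ x₂) (wedge K V y₁ y₂) =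
        h x₁ y₁ * h x₂ y₂ - h x₁ y₂ * h x₂ y₁) →
      ∀ u v, h₂ u v = σ (h₂ v u)) := by
  have : RingHomInvPair (σ : K →+* K) σ := ⟨RingHom.ext hσ, RingHom.ext hσ⟩
  let B : V →ₗ[K] V →ₛₗ[(σ : K →+* K)] K := .mk₂'ₛₗ (.id K) (σ : K →+* K) h hadd₁
    (fun a x y ↦ by simpa using hsmul a 1 x y) hadd₂ (fun b x y ↦ by simpa using hsmul 1 b x y)
  have hS : ∀ x₁ x₂ y₁ y₂ : V, sesqDegTwo B (wedge K V x₁ x₂) (wedge K V y₁ y₂) =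
      h x₁ y₁ * h x₂ y₂ - h x₁ y₂ * h x₂ y₁ :=
    sesqDegTwo_wedge_wedge B
  refine ⟨⟨fun u v ↦ sesqDegTwo B u v, ⟨fun u u' v ↦ LinearMap.map_add₂ _ u u' v,
    fun u v v' ↦ map_add _ v v', fun a u v ↦ LinearMap.map_smul₂ _ a u v,
    fun b u v ↦ map_smulₛₗ (sesqDegTwo B u) b v, hS⟩,
    fun g ⟨add_left, add_right, smul_left, smul_right, hwedge⟩ ↦
      eq_sesqForm_of_wedge (sesqDegTwo B) g add_left add_right smul_left smul_right
        fun x₁ x₂ y₁ y₂ ↦ (hwedge x₁ x₂ y₁ y₂).trans (hS x₁ x₂ y₁ y₂).symm⟩, ?_⟩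
  intro g add_left add_right smul_left smul_right hwedge u v
  have hg := eq_sesqForm_of_wedge (sesqDegTwo B) g add_left add_right smul_left smul_right
    fun x₁ x₂ y₁ y₂ ↦ (hwedge x₁ x₂ y₁ y₂).trans (hS x₁ x₂ y₁ y₂).symm
  have hg_conj := eq_sesqForm_of_wedge (sesqDegTwo B) (fun u v ↦ σ (g v u))
    (by simp [add_right]) (by simp [add_left]) (by simp [smul_right, hσ]) (by simp [smul_left])
    fun x₁ x₂ y₁ y₂ ↦ by
      rw [hS, hwedge, map_sub, map_mul, map_mul, ← hherm, ← hherm, ← hherm, ← hherm]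
      ring
  exact congr_fun₂ (hg.trans hg_conj.symm) u v

/-- Given a σ-hermitian form `h` on `V`, there is a unique map
`h₂ : ⋀²V × ⋀²V → K` which is additive in each argument, `K`-linear in the first,
σ-semilinear in the second, and satisfies
`h₂(x₁ ∧ x₂, y₁ ∧ y₂) = h(x₁,y₁)h(x₂,y₂) − h(x₁,y₂)h(x₂,y₁)`.
Moreover this `h₂` is again σ-hermitian. -/
theorem exists_unique_hermitian_form_on_exterior_square
    (K V : Type*) [Field K] [AddCommGroup V] [Module K V] [FiniteDimensional K V]
    (hchar : (2 : K) ≠ 0)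
    (σ : K ≃+* K) (hσ : ∀ a, σ (σ a) = a)
    (h : V → V → K)
    (hadd₁ : ∀ x x' y, h (x + x') y = h x y + h x' y)
    (hadd₂ : ∀ x y y', h x (y + y') = h x y + h x y')
    (hsmul : ∀ (a b : K) (x y : V), h (a • x) (b • y) = a * σ b * h x y)
    (hherm : ∀ x y, h x y = σ (h y x)) :
    (∃! h₂ : degTwo K V → degTwo K V → K,
      (∀ u u' v, h₂ (u + u') v = h₂ u v + h₂ u' v) ∧
      (∀ u v v', h₂ u (v + v') = h₂ u v + h₂ u v') ∧
      (∀ (a : K) (u v : degTwo K V), h₂ (a • u) v = a * h₂ u v) ∧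
      (∀ (b : K) (u v : degTwo K V), h₂ u (b • v) = σ b * h₂ u v) ∧
      (∀ x₁ x₂ y₁ y₂ : V, h₂ (wedge K V x₁ x₂) (wedge K V y₁ y₂) =
        h x₁ y₁ * h x₂ y₂ - h x₁ y₂ * h x₂ y₁)) ∧
    (∀ h₂ : degTwo K V → degTwo K V → K,
      (∀ u u' v, h₂ (u + u') v = h₂ u v + h₂ u' v) →
      (∀ u v v', h₂ u (v + v') = h₂ u v + h₂ u v') →
      (∀ (a : K) (u v : degTwo K V), h₂ (a • u) v = a * h₂ u v) →
      (∀ (b : K) (u v : degTwo K V), h₂ u (b • v) = σ b * h₂ u v) →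
      (∀ x₁ x₂ y₁ y₂ : V, h₂ (wedge K V x₁ x₂) (wedge K V y₁ y₂) =
        h x₁ y₁ * h x₂ y₂ - h x₁ y₂ * h x₂ y₁) →
      ∀ u v, h₂ u v = σ (h₂ v u)) :=
  exists_unique_hermitian_form_on_exterior_square_general K V σ hσ h hadd₁ hadd₂ hsmul hherm
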